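/- For every b > 3^{4/3}/2 and every t ∈ (0,1], the cubic polynomial P(r) = (3/2)·t·r³ - b·r + 1 has exactly one negative real root and exactly two positive real roots, and the two positive roots are distinct. -/

import Mathlib

/-! For `a, b, c > 0` the cubic `f x = a x³ - b x + c` has critical points `±m` with `3 a m² = b`;
it increases on `(-∞, -m]` and `[m, ∞)` and decreases on `[-m, m]`. Since `f (±m) = c ∓ 2bm/3`,
the discriminant condition `27 a c² < 4 b³` says exactly that `f m < 0 < f (-m)`, so there is one
root on each monotone piece: one below `-m` and two positive ones, separated by `m`. -/

open Set

def depressedCubic (a b c x : ℝ) : ℝ := a * x ^ 3 - b * x + c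

namespace depressedCubic

variable {a b c m : ℝ}

theorem continuous : Continuous (depressedCubic a b c) := by
  unfold depressedCubic; fun_prop

theorem apply_zero : depressedCubic a b c 0 = c := by
  simp [depressedCubic]

theorem sub_eq (x y : ℝ) :
    depressedCubic a b c y - depressedCubic a b c x =
      (y - x) * (a * (x ^ 2 + x * y + y ^ 2) - b) := by
  unfold depressedCubic; ring

theorem strictMonoOn_Ici (ha : 0 < a) (hm : 3 * a * m ^ 2 = b) (hm0 : 0 ≤ m) :
    StrictMonoOn (depressedCubic a b c) (Ici m) := by
  intro x hx y hy hxy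
  have : 3 * m ^ 2 < x ^ 2 + x * y + y ^ 2 := by
    simp only [mem_Ici] at hx hy; nlinarith
  rw [← sub_pos, sub_eq]
  exact mul_pos (sub_pos.2 hxy) (by nlinarith)

theorem strictMonoOn_Iic (ha : 0 < a) (hm : 3 * a * m ^ 2 = b) (hm0 : 0 ≤ m) :
    StrictMonoOn (depressedCubic a b c) (Iic (-m)) := by
  intro x hx y hy hxy
  have : 3 * m ^ 2 < x ^ 2 + x * y + y ^ 2 := by
    simp only [mem_Iic] at hx hy; nlinarith
  rw [← sub_pos, sub_eq]
  exact mul_pos (sub_pos.2 hxy) (by nlinarith)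

theorem strictAntiOn_Icc (ha : 0 < a) (hm : 3 * a * m ^ 2 = b) :
    StrictAntiOn (depressedCubic a b c) (Icc (-m) m) := by
  intro x hx y hy hxy
  have : x ^ 2 + x * y + y ^ 2 < 3 * m ^ 2 := by
    simp only [mem_Icc] at hx hy; nlinarith
  rw [← sub_neg, sub_eq]
  exact mul_neg_of_pos_of_neg (sub_pos.2 hxy) (by nlinarith)

theorem apply_eq_of_critical (hm : 3 * a * m ^ 2 = b) :
    depressedCubic a b c m = c - 2 * b * m / 3 := by
  unfold depressedCubic; linear_combination m / 3 * hm

theorem apply_neg_eq_of_critical (hm : 3 * a * m ^ 2 = b) :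
    depressedCubic a b c (-m) = c + 2 * b * m / 3 := by
  unfold depressedCubic; linear_combination -m / 3 * hm

theorem apply_three_mul_eq_of_critical (hm : 3 * a * m ^ 2 = b) :
    depressedCubic a b c (3 * m) = c + 6 * b * m := by
  unfold depressedCubic; linear_combination 9 * m * hm

theorem apply_neg_three_mul_eq_of_critical (hm : 3 * a * m ^ 2 = b) :
    depressedCubic a b c (-(3 * m)) = c - 6 * b * m := by
  unfold depressedCubic; linear_combination -9 * m * hm

theorem exists_critical_of_discrim (ha : 0 < a) (hb : 0 < b)
    (hdisc : 27 * a * c ^ 2 < 4 * b ^ 3) :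
    ∃ m, 0 < m ∧ 3 * a * m ^ 2 = b ∧ 3 * c < 2 * b * m := by
  refine ⟨√(b / (3 * a)), by positivity, ?_, ?_⟩
  · rw [Real.sq_sqrt (by positivity)]; field_simp
  · have hsq : (2 * b * √(b / (3 * a))) ^ 2 = 4 * b ^ 3 / (3 * a) := by
      rw [mul_pow, mul_pow, Real.sq_sqrt (by positivity)]; field_simp; ring
    have : (3 * c) ^ 2 < (2 * b * √(b / (3 * a))) ^ 2 := by
      rw [hsq, lt_div_iff₀ (by positivity)]; nlinarith
    exact lt_of_pow_lt_pow_left₀ 2 (by positivity) this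

theorem existsUnique_neg_root (ha : 0 < a) (hb : 0 < b) (hc : 0 < c)
    (hdisc : 27 * a * c ^ 2 < 4 * b ^ 3) :
    ∃! r, r < 0 ∧ depressedCubic a b c r = 0 := by
  obtain ⟨m, hm0, hm, hcm⟩ := exists_critical_of_discrim ha hb hdisc
  obtain ⟨r, ⟨hr₁, hr₂⟩, hr⟩ : ∃ r ∈ Ioo (-(3 * m)) (-m), depressedCubic a b c r = 0 :=
    intermediate_value_Ioo (by linarith) continuous.continuousOn
      ⟨by rw [apply_neg_three_mul_eq_of_critical hm]; nlinarith,
        by rw [apply_neg_eq_of_critical hm]; positivity⟩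
  refine ⟨r, ⟨by linarith, hr⟩, fun s ⟨hs, hs0⟩ => ?_⟩
  have hsm : s ≤ -m := by
    by_contra! hsm
    have : depressedCubic a b c 0 < depressedCubic a b c s :=
      strictAntiOn_Icc ha hm ⟨hsm.le, by linarith⟩ ⟨by linarith, hm0.le⟩ hs
    rw [apply_zero, hs0] at this
    linarith
  exact (strictMonoOn_Iic ha hm hm0.le).injOn hsm hr₂.le (hs0.trans hr.symm)

theorem exists_two_pos_roots (ha : 0 < a) (hb : 0 < b) (hc : 0 < c)
    (hdisc : 27 * a * c ^ 2 < 4 * b ^ 3) :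
    ∃ r₁ r₂, 0 < r₁ ∧ r₁ < r₂ ∧ depressedCubic a b c r₁ = 0 ∧ depressedCubic a b c r₂ = 0 ∧
      ∀ r, 0 < r → depressedCubic a b c r = 0 → r = r₁ ∨ r = r₂ := by
  obtain ⟨m, hm0, hm, hcm⟩ := exists_critical_of_discrim ha hb hdisc
  have hneg : depressedCubic a b c m < 0 := by
    rw [apply_eq_of_critical hm]; linarith
  obtain ⟨r₁, ⟨hr₁0, hr₁m⟩, hr₁⟩ : ∃ r ∈ Ioo 0 m, depressedCubic a b c r = 0 :=
    intermediate_value_Ioo' hm0.le continuous.continuousOn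
      ⟨hneg, apply_zero.symm ▸ hc⟩
  obtain ⟨r₂, ⟨hr₂m, -⟩, hr₂⟩ : ∃ r ∈ Ioo m (3 * m), depressedCubic a b c r = 0 :=
    intermediate_value_Ioo (by linarith) continuous.continuousOn
      ⟨hneg, by rw [apply_three_mul_eq_of_critical hm]; positivity⟩
  refine ⟨r₁, r₂, hr₁0, hr₁m.trans hr₂m, hr₁, hr₂, fun r hr hr0 => ?_⟩
  rcases le_or_gt r m with hrm | hrm
  · exact .inl <| (strictAntiOn_Icc ha hm).injOn ⟨by linarith, hrm⟩
      ⟨by linarith, hr₁m.le⟩ (hr0.trans hr₁.symm)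
  · exact .inr <| (strictMonoOn_Ici ha hm hm0.le).injOn hrm.le hr₂m.le (hr0.trans hr₂.symm)

end depressedCubic

theorem cubic_root_structure (b t : ℝ) (hb : (3:ℝ) ^ ((4:ℝ)/3) / 2 < b)
    (ht : t ∈ Set.Ioc (0:ℝ) 1) :
    (∃! r : ℝ, r < 0 ∧ (3/2) * t * r ^ 3 - b * r + 1 = 0) ∧
    (∃ r₁ r₂ : ℝ, 0 < r₁ ∧ r₁ < r₂ ∧
      (3/2) * t * r₁ ^ 3 - b * r₁ + 1 = 0 ∧
      (3/2) * t * r₂ ^ 3 - b * r₂ + 1 = 0 ∧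
      ∀ r : ℝ, 0 < r → (3/2) * t * r ^ 3 - b * r + 1 = 0 → r = r₁ ∨ r = r₂) := by
  obtain ⟨ht0, ht1⟩ := ht
  have hb0 : 0 < b := lt_trans (by positivity) hb
  have hb3 : 81 / 8 < b ^ 3 := by
    have hcube : ((3:ℝ) ^ ((4:ℝ)/3) / 2) ^ 3 = 81 / 8 := by
      rw [div_pow, ← Real.rpow_natCast, ← Real.rpow_mul (by norm_num)]; norm_num
    exact hcube ▸ pow_lt_pow_left₀ hb (by positivity) (by norm_num)
  have hdisc : 27 * (3/2 * t) * 1 ^ 2 < 4 * b ^ 3 := by nlinarith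
  exact ⟨depressedCubic.existsUnique_neg_root (by positivity) hb0 one_pos hdisc,
    depressedCubic.exists_two_pos_roots (by positivity) hb0 one_pos hdisc⟩
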